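/- arXiv:1903.07837 — 2 statements merged into one kernel-verified Lean document; each statement's English description precedes it below -/
import Mathlib

section
/- Let M be a two-counter Minsky machine with instruction set I and let (A, R, Rp, A0, ↪) be its APA encoding. If x = (q1, 2, q2, ε) ∈ I, then for all m1, m2 ∈ ℕ and every reference set Ax ⊆ A there exist two consecutive APA transitions F(A^I ∪ {σQ(q1), σ1(m1), σ2(m2)}) ↪^{Ax} F(A^I ∪ {σIc(x), σ1(m1), σ2(m2)}) ↪^{Ax} F(A^I ∪ {σQ(q2), σ1(m1), σ2(m2+1)}), simulating the increment of the second counter. -/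
/-- A two-counter Minsky machine over a state type `Q`.  An instruction
`(q1, i, q2, u)` has source state `q1 ≠ qf`, counter index `i ∈ {1,2}`,
target state `q2` and optional alternative target `u : Option Q`
(`none` playing the role of `ε`). -/
structure Minsky (Q : Type*) where
  n1 : ℕ
  n2 : ℕ
  q0 : Q
  qf : Q
  I : Set (Q × ℕ × Q × Option Q)
  I_idx : ∀ x ∈ I, x.2.1 = 1 ∨ x.2.1 = 2
  I_src : ∀ x ∈ I, x.1 ≠ qf
  I_total : ∀ q : Q, q ≠ qf → ∃ i q2 u, (q, i, q2, u) ∈ I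

/-- The one-step relation `⇒` of a two-counter Minsky machine. -/
inductive Minsky.Step {Q : Type*} (M : Minsky Q) : Q × ℕ × ℕ → Q × ℕ × ℕ → Prop
  | inc1 {q1 q2 : Q} {m1 m2 : ℕ} : (q1, 1, q2, (none : Option Q)) ∈ M.I →
      M.Step (q1, m1, m2) (q2, m1 + 1, m2)
  | inc2 {q1 q2 : Q} {m1 m2 : ℕ} : (q1, 2, q2, (none : Option Q)) ∈ M.I →
      M.Step (q1, m1, m2) (q2, m1, m2 + 1)
  | dec1 {q1 q2 q3 : Q} {m1 m2 : ℕ} : (q1, 1, q2, some q3) ∈ M.I → 0 < m1 →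
      M.Step (q1, m1, m2) (q3, m1 - 1, m2)
  | dec2 {q1 q2 q3 : Q} {m1 m2 : ℕ} : (q1, 2, q2, some q3) ∈ M.I → 0 < m2 →
      M.Step (q1, m1, m2) (q3, m1, m2 - 1)
  | zero1 {q1 q2 q3 : Q} {m2 : ℕ} : (q1, 1, q2, some q3) ∈ M.I →
      M.Step (q1, 0, m2) (q2, 0, m2)
  | zero2 {q1 q2 q3 : Q} {m1 : ℕ} : (q1, 2, q2, some q3) ∈ M.I →
      M.Step (q1, m1, 0) (q2, m1, 0)

/-- `M.StepN k c c'` says `⇒^k(c) = c'`, i.e. `c'` is obtained from `c`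
by exactly `k` Minsky machine steps. -/
def Minsky.StepN {Q : Type*} (M : Minsky Q) : ℕ → Q × ℕ × ℕ → Q × ℕ × ℕ → Prop
  | 0, c, c' => c = c'
  | k + 1, c, c' => ∃ c'', M.Step c c'' ∧ M.StepN k c'' c'

/-- An Abstract Persuasion Argumentation framework over the argument type `α`:
an attack relation `R`, a persuasion relation `Rp ⊆ A × (A ∪ {ε}) × A`
(`none` playing the role of `ε`), and an initial set `A0`.
A state `F(A1)` is identified with the set `A1 ⊆ A` of visible arguments
(since the state is `(A1, R ∩ (A1 × A1))`, a function of `A1`). -/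
structure APA (α : Type*) where
  R : Set (α × α)
  Rp : Set (α × Option α × α)
  A0 : Set α

namespace APA

variable {α : Type*} (F : APA α)

/-- `a1` attacks `a2` in the state `F(A1)`. -/
def Attacks (A1 : Set α) (a1 a2 : α) : Prop :=
  a1 ∈ A1 ∧ a2 ∈ A1 ∧ (a1, a2) ∈ F.R

/-- `Γ^{Ax}_{F(A1)}`: members `(a1, α, a2)` of `Rp` with `a1 ∈ A1`,
`α ∈ {ε} ∪ A1`, and `a1` not attacked in `F(A1)` by any member of `Ax`. -/
def gamma (Ax A1 : Set α) : Set (α × Option α × α) :=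
  {t | t ∈ F.Rp ∧ t.1 ∈ A1 ∧ (∀ a : α, t.2.1 = some a → a ∈ A1) ∧
    ∀ b ∈ Ax, ¬ F.Attacks A1 b t.1}

/-- `neg^{A1}(Γ)`. -/
def neg (A1 : Set α) (Γ : Set (α × Option α × α)) : Set α :=
  {ax | ax ∈ A1 ∧ ∃ a1 ∈ A1, ∃ a2 : α, (a1, some ax, a2) ∈ Γ}

/-- `pos^{A1}(Γ)`. -/
def pos (A1 : Set α) (Γ : Set (α × Option α × α)) : Set α :=
  {a2 | ∃ a1 ∈ A1, ∃ m : Option α, (∀ a : α, m = some a → a ∈ A1) ∧ (a1, m, a2) ∈ Γ}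

/-- The transition `F(A1) ↪^{Ax} F(A2)` effected by the specific nonempty
`Γ ⊆ Γ^{Ax}_{F(A1)}`. -/
def TransVia (Ax : Set α) (Γ : Set (α × Option α × α)) (A1 A2 : Set α) : Prop :=
  Γ.Nonempty ∧ Γ ⊆ F.gamma Ax A1 ∧ A2 = (A1 \ neg A1 Γ) ∪ pos A1 Γ

/-- The transition relation `F(A1) ↪^{Ax} F(A2)`. -/
def Trans (Ax A1 A2 : Set α) : Prop :=
  ∃ Γ : Set (α × Option α × α), F.TransVia Ax Γ A1 A2

/-- A state `F(A1)` is reachable iff it is obtained from the initial state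
`F(A0)` by a finite sequence of transitions (with arbitrary reference sets). -/
def Reachable (A1 : Set α) : Prop :=
  Relation.ReflTransGen (fun X Y => ∃ Ax : Set α, F.Trans Ax X Y) F.A0 A1

end APA

/-- `sigC σ1 σ2 i` is `σi` for `i ∈ {1, 2}`. -/
def sigC {α : Type*} (σ1 σ2 : ℕ → α) (i : ℕ) : ℕ → α :=
  if i = 1 then σ1 else σ2

/-- The persuasion relation of the APA encoding of a Minsky machine `M`. -/
def encRp {Q α : Type*} (M : Minsky Q) (σ1 σ2 : ℕ → α) (σQ : Q → α)
    (σI σIc : M.I → α) : Set (α × Option α × α) :=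
  {t | (∃ x : M.I, t = (σI x, some (σQ x.val.1), σIc x)) ∨
    (∃ x : M.I, ∃ n : ℕ, x.val.2.2.2 = none ∧
      t = (σIc x, some (sigC σ1 σ2 x.val.2.1 n), sigC σ1 σ2 x.val.2.1 (n + 1))) ∨
    (∃ x : M.I, ∃ n : ℕ, 1 ≤ n ∧ (∃ q3 : Q, x.val.2.2.2 = some q3) ∧
      t = (σIc x, some (sigC σ1 σ2 x.val.2.1 n), sigC σ1 σ2 x.val.2.1 (n - 1))) ∨
    (∃ x : M.I, ∃ n : ℕ, x.val.2.2.2 = none ∧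
      t = (sigC σ1 σ2 x.val.2.1 n, some (σIc x), σQ x.val.2.2.1)) ∨
    (∃ x : M.I, ∃ n : ℕ, 1 ≤ n ∧ ∃ q3 : Q, x.val.2.2.2 = some q3 ∧
      t = (sigC σ1 σ2 x.val.2.1 n, some (σIc x), σQ q3)) ∨
    (∃ x : M.I, ∃ q3 : Q, x.val.2.2.2 = some q3 ∧
      t = (sigC σ1 σ2 x.val.2.1 0, some (σIc x), σQ x.val.2.2.1))}

/-- The APA encoding of a two-counter Minsky machine `M`, over the argument
type `α` (playing the role of the class `A` of arguments): injective maps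
`σ1, σ2, σQ, σI, σIc` with pairwise disjoint ranges covering `α`, an empty
attack relation, the persuasion relation `encRp`, and the initial set
`{σ1 n1, σ2 n2, σQ q0} ∪ A^I`. -/
structure Encoding {Q : Type*} (M : Minsky Q) (α : Type*) extends APA α where
  σ1 : ℕ → α
  σ2 : ℕ → α
  σQ : Q → α
  σI : M.I → α
  σIc : M.I → α
  inj1 : Function.Injective σ1
  inj2 : Function.Injective σ2
  injQ : Function.Injective σQ
  injI : Function.Injective σI
  injIc : Function.Injective σIc
  disjoint_ranges : List.Pairwise Disjoint
    [Set.range σ1, Set.range σ2, Set.range σQ, Set.range σI, Set.range σIc]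
  ranges_cover : Set.range σ1 ∪ Set.range σ2 ∪ Set.range σQ ∪
    Set.range σI ∪ Set.range σIc = Set.univ
  R_empty : toAPA.R = ∅
  Rp_spec : toAPA.Rp = encRp M σ1 σ2 σQ σI σIc
  A0_spec : toAPA.A0 = {σ1 M.n1, σ2 M.n2, σQ M.q0} ∪ Set.range σI

/-- The set of visible arguments of the APA state `F(A^I ∪ {σQ q, σ1 m1, σ2 m2})`
corresponding to the Minsky machine configuration `(q, m1, m2)`. -/
def encState {Q α : Type*} {M : Minsky Q} (E : Encoding M α)
    (q : Q) (m1 m2 : ℕ) : Set α :=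
  Set.range E.σI ∪ {E.σQ q, E.σ1 m1, E.σ2 m2}

/-- The set of visible arguments of the intermediate APA state
`F(A^I ∪ {σIc x, σ1 m1, σ2 m2})`. -/
def encStateC {Q α : Type*} {M : Minsky Q} (E : Encoding M α)
    (x : M.I) (m1 m2 : ℕ) : Set α :=
  Set.range E.σI ∪ {E.σIc x, E.σ1 m1, E.σ2 m2}

/-!
The encoding has no attacks, so every persuasion whose source and middle argument are visible
can fire, whatever the reference set. The first transition fires `(σI x, σQ q1, σIc x)`, trading
the state argument for the control argument of `x`. The second fires
`(σIc x, σ2 m2, σ2 (m2 + 1))` and `(σ2 m2, σIc x, σQ q2)` together: each consumes the other's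
source, so the control argument and the old counter value give way to the new counter value and
the target state. Disjointness of the ranges of the `σ`s guarantees that nothing else is removed.
-/

namespace APA

variable {α : Type*} (F : APA α)

theorem mem_gamma_of_R_eq_empty (hR : F.R = ∅) {Ax A1 : Set α} {a b c : α}
    (ht : (a, some b, c) ∈ F.Rp) (ha : a ∈ A1) (hb : b ∈ A1) :
    (a, some b, c) ∈ F.gamma Ax A1 :=
  ⟨ht, ha, by simpa using hb, fun _ _ hatt => by simpa [hR] using hatt.2.2⟩

variable {F}

theorem neg_eq_of_subset_gamma {Ax A1 : Set α} {Γ : Set (α × Option α × α)}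
    (hΓ : Γ ⊆ F.gamma Ax A1) : neg A1 Γ = {b | ∃ a c, (a, some b, c) ∈ Γ} := by
  ext b
  constructor
  · rintro ⟨-, a, -, c, ht⟩
    exact ⟨a, c, ht⟩
  · rintro ⟨a, c, ht⟩
    exact ⟨(hΓ ht).2.2.1 b rfl, a, (hΓ ht).2.1, c, ht⟩

theorem pos_eq_of_subset_gamma {Ax A1 : Set α} {Γ : Set (α × Option α × α)}
    (hΓ : Γ ⊆ F.gamma Ax A1) : pos A1 Γ = {c | ∃ a m, (a, m, c) ∈ Γ} := by
  ext c
  constructor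
  · rintro ⟨a, -, m, -, ht⟩
    exact ⟨a, m, ht⟩
  · rintro ⟨a, m, ht⟩
    exact ⟨a, (hΓ ht).2.1, m, (hΓ ht).2.2.1, ht⟩

theorem trans_pair {Ax A1 : Set α} {a b c a' b' c' : α}
    (h : (a, some b, c) ∈ F.gamma Ax A1) (h' : (a', some b', c') ∈ F.gamma Ax A1) :
    F.Trans Ax A1 ((A1 \ {b, b'}) ∪ {c, c'}) := by
  have hΓ : {(a, some b, c), (a', some b', c')} ⊆ F.gamma Ax A1 := by
    simp [Set.insert_subset_iff, h, h']
  refine ⟨_, Set.insert_nonempty _ _, hΓ, ?_⟩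
  rw [neg_eq_of_subset_gamma hΓ, pos_eq_of_subset_gamma hΓ]
  congr 2 <;> ext <;> aesop

theorem trans_single {Ax A1 : Set α} {a b c : α} (h : (a, some b, c) ∈ F.gamma Ax A1) :
    F.Trans Ax A1 ((A1 \ {b}) ∪ {c}) := by
  simpa using trans_pair h h

end APA

theorem sigC_two {α : Type*} (σ1 σ2 : ℕ → α) : sigC σ1 σ2 2 = σ2 := rfl

namespace Encoding

variable {Q α : Type*} {M : Minsky Q} (E : Encoding M α)

theorem activate_mem_Rp (x : M.I) : (E.σI x, some (E.σQ x.val.1), E.σIc x) ∈ E.Rp := by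
  rw [E.Rp_spec]
  exact Or.inl ⟨x, rfl⟩

theorem increment_mem_Rp (x : M.I) (hx : x.val.2.2.2 = none) (n : ℕ) :
    (E.σIc x, some (sigC E.σ1 E.σ2 x.val.2.1 n), sigC E.σ1 E.σ2 x.val.2.1 (n + 1)) ∈ E.Rp := by
  rw [E.Rp_spec]
  exact Or.inr (Or.inl ⟨x, n, hx, rfl⟩)

theorem increment_target_mem_Rp (x : M.I) (hx : x.val.2.2.2 = none) (n : ℕ) :
    (sigC E.σ1 E.σ2 x.val.2.1 n, some (E.σIc x), E.σQ x.val.2.2.1) ∈ E.Rp := by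
  rw [E.Rp_spec]
  exact Or.inr (Or.inr (Or.inr (Or.inl ⟨x, n, hx, rfl⟩)))

theorem disjoint_ranges' :
    Disjoint (Set.range E.σ1) (Set.range E.σ2) ∧ Disjoint (Set.range E.σ1) (Set.range E.σQ) ∧
    Disjoint (Set.range E.σ1) (Set.range E.σI) ∧ Disjoint (Set.range E.σ1) (Set.range E.σIc) ∧
    Disjoint (Set.range E.σ2) (Set.range E.σQ) ∧ Disjoint (Set.range E.σ2) (Set.range E.σI) ∧
    Disjoint (Set.range E.σ2) (Set.range E.σIc) ∧ Disjoint (Set.range E.σQ) (Set.range E.σI) ∧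
    Disjoint (Set.range E.σQ) (Set.range E.σIc) ∧ Disjoint (Set.range E.σI) (Set.range E.σIc) := by
  simpa [and_assoc] using E.disjoint_ranges

@[simp] theorem σ1_ne_σ2 (m n : ℕ) : E.σ1 m ≠ E.σ2 n :=
  E.disjoint_ranges'.1.ne_of_mem ⟨m, rfl⟩ ⟨n, rfl⟩

@[simp] theorem σ1_ne_σQ (m : ℕ) (q : Q) : E.σ1 m ≠ E.σQ q :=
  E.disjoint_ranges'.2.1.ne_of_mem ⟨m, rfl⟩ ⟨q, rfl⟩

@[simp] theorem σ1_ne_σIc (m : ℕ) (x : M.I) : E.σ1 m ≠ E.σIc x :=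
  E.disjoint_ranges'.2.2.2.1.ne_of_mem ⟨m, rfl⟩ ⟨x, rfl⟩

@[simp] theorem σ2_ne_σQ (m : ℕ) (q : Q) : E.σ2 m ≠ E.σQ q :=
  E.disjoint_ranges'.2.2.2.2.1.ne_of_mem ⟨m, rfl⟩ ⟨q, rfl⟩

@[simp] theorem σI_ne_σ2 (x : M.I) (m : ℕ) : E.σI x ≠ E.σ2 m :=
  (E.disjoint_ranges'.2.2.2.2.2.1.ne_of_mem ⟨m, rfl⟩ ⟨x, rfl⟩).symm

@[simp] theorem σI_ne_σQ (x : M.I) (q : Q) : E.σI x ≠ E.σQ q :=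
  (E.disjoint_ranges'.2.2.2.2.2.2.2.1.ne_of_mem ⟨q, rfl⟩ ⟨x, rfl⟩).symm

@[simp] theorem σI_ne_σIc (x y : M.I) : E.σI x ≠ E.σIc y :=
  E.disjoint_ranges'.2.2.2.2.2.2.2.2.2.ne_of_mem ⟨x, rfl⟩ ⟨y, rfl⟩

theorem encState_sdiff_union (q : Q) (x : M.I) (m1 m2 : ℕ) :
    (encState E q m1 m2 \ {E.σQ q}) ∪ {E.σIc x} = encStateC E x m1 m2 := by
  ext a
  simp only [encState, encStateC]
  aesop

theorem encStateC_sdiff_union (x : M.I) (q : Q) (m1 m2 : ℕ) :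
    (encStateC E x m1 m2 \ {E.σ2 m2, E.σIc x}) ∪ {E.σ2 (m2 + 1), E.σQ q} =
      encState E q m1 (m2 + 1) := by
  ext a
  simp only [encState, encStateC]
  aesop

end Encoding

theorem increment_second_counter_simulated_general {Q α : Type*}
    (M : Minsky Q) (E : Encoding M α) (q1 q2 : Q)
    (hx : (q1, 2, q2, (none : Option Q)) ∈ M.I) (m1 m2 : ℕ) (Ax : Set α) :
    E.toAPA.Trans Ax (encState E q1 m1 m2)
      (encStateC E ⟨(q1, 2, q2, none), hx⟩ m1 m2) ∧
    E.toAPA.Trans Ax (encStateC E ⟨(q1, 2, q2, none), hx⟩ m1 m2)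
      (encState E q2 m1 (m2 + 1)) := by
  set x : M.I := ⟨(q1, 2, q2, none), hx⟩
  have hgamma {A1 : Set α} {a b c : α} (ht : (a, some b, c) ∈ E.Rp) (ha : a ∈ A1)
      (hb : b ∈ A1) : (a, some b, c) ∈ E.gamma Ax A1 :=
    E.mem_gamma_of_R_eq_empty E.R_empty ht ha hb
  constructor
  · have hactivate := APA.trans_single <| hgamma (E.activate_mem_Rp x)
      (A1 := encState E q1 m1 m2) (by simp [encState]) (by simp [encState, x])
    rwa [E.encState_sdiff_union] at hactivate
  · have hinc := APA.trans_pair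
      (hgamma (E.increment_mem_Rp x rfl m2) (A1 := encStateC E x m1 m2)
        (by simp [encStateC]) (by simp [encStateC, x, sigC_two]))
      (hgamma (E.increment_target_mem_Rp x rfl m2)
        (by simp [encStateC, x, sigC_two]) (by simp [encStateC]))
    rwa [sigC_two, E.encStateC_sdiff_union] at hinc

/-- simulation of the increment instruction `(q1, 2, q2, ε)`
of the second counter by two consecutive APA transitions. -/
theorem increment_second_counter_simulated {Q α : Type*} [Finite Q]
    (M : Minsky Q) (E : Encoding M α) (q1 q2 : Q)
    (hx : (q1, 2, q2, (none : Option Q)) ∈ M.I) (m1 m2 : ℕ) (Ax : Set α) :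
    E.toAPA.Trans Ax (encState E q1 m1 m2)
      (encStateC E ⟨(q1, 2, q2, none), hx⟩ m1 m2) ∧
    E.toAPA.Trans Ax (encStateC E ⟨(q1, 2, q2, none), hx⟩ m1 m2)
      (encState E q2 m1 (m2 + 1)) :=
  increment_second_counter_simulated_general M E q1 q2 hx m1 m2 Ax
end

section
/- Let M be a two-counter Minsky machine with instruction set I and let (A, R, Rp, A0, ↪) be its APA encoding. If x = (q1, 2, q2, q3) ∈ I, then for all m1 ∈ ℕ and every reference set Ax ⊆ A there exist two consecutive APA transitions F(A^I ∪ {σQ(q1), σ1(m1), σ2(0)}) ↪^{Ax} F(A^I ∪ {σIc(x), σ1(m1), σ2(0)}) ↪^{Ax} F(A^I ∪ {σQ(q2), σ1(m1), σ2(0)}), simulating the zero test of the second counter. -/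
/-
Both transitions fire a single persuasion triple: first `(σI x, σQ q1, σIc x)`, which trades the
state argument for the instruction's control argument, then the zero-test triple
`(σ2 0, σIc x, σQ q2)`, which trades it back for the target state. Since `R = ∅` nothing blocks a
triple, and disjointness of the ranges of the `σ`'s makes each trade an exchange of exactly one
argument.
-/

lemma Set.union_insert_diff_singleton_union {β : Type*} {S : Set β} {u w1 w2 : β} (v : β)
    (hu : u ∉ S) (hu1 : u ≠ w1) (hu2 : u ≠ w2) :
    (S ∪ {u, w1, w2}) \ {u} ∪ {v} = S ∪ {v, w1, w2} := by
  ext a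
  simp only [Set.mem_union, Set.mem_sdiff, Set.mem_insert_iff, Set.mem_singleton_iff]
  grind

namespace APA

variable {α : Type*} (F : APA α)

lemma neg_singleton {A1 : Set α} {b w : α} (c : α) (hb : b ∈ A1) (hw : w ∈ A1) :
    neg A1 {(b, some w, c)} = {w} := by
  ext a
  simp only [neg, Set.mem_ofPred_eq, Set.mem_singleton_iff, Prod.mk.injEq, Option.some.injEq]
  constructor
  · rintro ⟨-, -, -, -, -, rfl, -⟩
    rfl
  · rintro rfl
    exact ⟨hw, b, hb, c, rfl, rfl, rfl⟩

lemma pos_singleton {A1 : Set α} {b w : α} (c : α) (hb : b ∈ A1) (hw : w ∈ A1) :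
    pos A1 {(b, some w, c)} = {c} := by
  ext a
  simp only [pos, Set.mem_ofPred_eq, Set.mem_singleton_iff, Prod.mk.injEq]
  constructor
  · rintro ⟨-, -, -, -, -, -, rfl⟩
    rfl
  · rintro rfl
    exact ⟨b, hb, some w, fun a ha => Option.some.inj ha ▸ hw, rfl, rfl, rfl⟩

lemma not_attacks_of_R_eq_empty (hR : F.R = ∅) (A1 : Set α) (a b : α) : ¬ F.Attacks A1 a b :=
  fun h => by simpa [hR] using h.2.2

lemma trans_diff_singleton_union {Ax A1 : Set α} {b w c : α} (hp : (b, some w, c) ∈ F.Rp)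
    (hb : b ∈ A1) (hw : w ∈ A1) (hfree : ∀ a ∈ Ax, ¬ F.Attacks A1 a b) :
    F.Trans Ax A1 (A1 \ {w} ∪ {c}) := by
  refine ⟨{(b, some w, c)}, Set.singleton_nonempty _, ?_, ?_⟩
  · rintro t rfl
    exact ⟨hp, hb, fun a ha => Option.some.inj ha ▸ hw, hfree⟩
  · rw [neg_singleton c hb hw, pos_singleton c hb hw]

end APA

namespace Encoding

variable {Q α : Type*} {M : Minsky Q} (E : Encoding M α)

lemma disjoint_range_pairs :
    Disjoint (Set.range E.σ1) (Set.range E.σQ) ∧ Disjoint (Set.range E.σ1) (Set.range E.σIc) ∧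
    Disjoint (Set.range E.σ2) (Set.range E.σQ) ∧ Disjoint (Set.range E.σ2) (Set.range E.σIc) ∧
    Disjoint (Set.range E.σQ) (Set.range E.σI) ∧ Disjoint (Set.range E.σI) (Set.range E.σIc) := by
  have hd := E.disjoint_ranges
  simp only [List.pairwise_cons, List.mem_cons, List.not_mem_nil, forall_eq_or_imp,
    forall_eq, or_false, List.Pairwise.nil, and_true] at hd
  obtain ⟨⟨-, h1Q, -, h1C⟩, ⟨h2Q, -, h2C⟩, ⟨hQI, -⟩, hIC, -⟩ := hd
  exact ⟨h1Q, h1C, h2Q, h2C, hQI, hIC⟩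

lemma trans_encState_encStateC {Ax : Set α} (x : M.I) (m1 m2 : ℕ) :
    E.Trans Ax (encState E x.val.1 m1 m2) (encStateC E x m1 m2) := by
  obtain ⟨h1Q, -, h2Q, -, hQI, -⟩ := E.disjoint_range_pairs
  have hp : (E.σI x, some (E.σQ x.val.1), E.σIc x) ∈ E.Rp := by
    rw [E.Rp_spec]
    exact Or.inl ⟨x, rfl⟩
  have htrans := E.trans_diff_singleton_union (Ax := Ax) (A1 := encState E x.val.1 m1 m2) hp
    (by simp [encState]) (by simp [encState])
    fun a _ => E.not_attacks_of_R_eq_empty E.R_empty _ a _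
  convert htrans using 1
  rw [encState, encStateC, Set.union_insert_diff_singleton_union _
    (Set.disjoint_left.mp hQI ⟨_, rfl⟩) (h1Q.ne_of_mem ⟨_, rfl⟩ ⟨_, rfl⟩).symm
    (h2Q.ne_of_mem ⟨_, rfl⟩ ⟨_, rfl⟩).symm]

lemma trans_encStateC_encState_of_zero_test {Ax : Set α} (x : M.I) {q1 q2 q3 : Q}
    (hx : x.val = (q1, 2, q2, some q3)) (m1 : ℕ) :
    E.Trans Ax (encStateC E x m1 0) (encState E q2 m1 0) := by
  obtain ⟨-, h1C, -, h2C, -, hIC⟩ := E.disjoint_range_pairs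
  have hp : (E.σ2 0, some (E.σIc x), E.σQ q2) ∈ E.Rp := by
    rw [E.Rp_spec]
    refine Or.inr <| Or.inr <| Or.inr <| Or.inr <| Or.inr ⟨x, q3, by rw [hx], ?_⟩
    simp [sigC, hx]
  have htrans := E.trans_diff_singleton_union (Ax := Ax) (A1 := encStateC E x m1 0) hp
    (by simp [encStateC]) (by simp [encStateC])
    fun a _ => E.not_attacks_of_R_eq_empty E.R_empty _ a _
  convert htrans using 1
  rw [encState, encStateC, Set.union_insert_diff_singleton_union _
    (Set.disjoint_right.mp hIC ⟨_, rfl⟩) (h1C.ne_of_mem ⟨_, rfl⟩ ⟨_, rfl⟩).symm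
    (h2C.ne_of_mem ⟨_, rfl⟩ ⟨_, rfl⟩).symm]

end Encoding

theorem zero_test_second_counter_simulated_general {Q α : Type*}
    (M : Minsky Q) (E : Encoding M α) (q1 q2 q3 : Q)
    (hx : (q1, 2, q2, some q3) ∈ M.I) (m1 : ℕ) (Ax : Set α) :
    E.toAPA.Trans Ax (encState E q1 m1 0)
      (encStateC E ⟨(q1, 2, q2, some q3), hx⟩ m1 0) ∧
    E.toAPA.Trans Ax (encStateC E ⟨(q1, 2, q2, some q3), hx⟩ m1 0)
      (encState E q2 m1 0) :=
  ⟨E.trans_encState_encStateC ⟨_, hx⟩ m1 0,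
    E.trans_encStateC_encState_of_zero_test ⟨_, hx⟩ rfl m1⟩

/-- simulation of the zero test of the second counter for the
instruction `(q1, 2, q2, q3)` by two consecutive APA transitions. -/
theorem zero_test_second_counter_simulated {Q α : Type*} [Finite Q]
    (M : Minsky Q) (E : Encoding M α) (q1 q2 q3 : Q)
    (hx : (q1, 2, q2, some q3) ∈ M.I) (m1 : ℕ) (Ax : Set α) :
    E.toAPA.Trans Ax (encState E q1 m1 0)
      (encStateC E ⟨(q1, 2, q2, some q3), hx⟩ m1 0) ∧
    E.toAPA.Trans Ax (encStateC E ⟨(q1, 2, q2, some q3), hx⟩ m1 0)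
      (encState E q2 m1 0) :=
  zero_test_second_counter_simulated_general M E q1 q2 q3 hx m1 Ax
end
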